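/- (Quantum Crooks fluctuation theorem) Let N be a quantum channel on d×d complex matrices, γ a positive-definite density matrix with N(γ) positive definite, R_γ the Petz recovery map, and ρ a density matrix with ρ and N(ρ) positive definite. With eigenbases as above, define the forward quasi-probability P^{μ,ν}_{→,ij,k'l'} = p_μ ⟨φ'_ν| Π_{k'} N(Π_i |ψ_μ⟩⟨ψ_μ| Π_j) Π_{l'} |φ'_ν⟩ and the backward quasi-probability P^{μ,ν}_{←,ij,k'l'} = p'_ν ⟨ψ_μ| Π_i R_γ(Π_{k'} |φ'_ν⟩⟨φ'_ν| Π_{l'}) Π_j |ψ_μ⟩, and the real entropy productions σ_R(μ,i,j,ν,k',l') = (log p_μ − log p'_ν) − (1/2)log(r_i r_j/(r'_{k'} r'_{l'})) for the forward process and σ̃_R(μ,i,j,ν,k',l') = (log p'_ν − log p_μ) − (1/2)log(r'_{k'} r'_{l'}/(r_i r_j)) for the backward process. Then for every real s: ∑_{tuples with σ_R = s} P^{μ,ν}_{→,ij,k'l'} = e^{s} · ∑_{tuples with σ̃_R = −s} P^{μ,ν}_{←,ij,k'l'}; i.e., P_→(σ)/P_←(−σ) = e^{σ}. -/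

import Mathlib

open Matrix
open scoped ComplexOrder

/-- ⟨v|A|w⟩ -/
noncomputable def braket {d : ℕ} (v : Fin d → ℂ) (A : Matrix (Fin d) (Fin d) ℂ)
    (w : Fin d → ℂ) : ℂ :=
  dotProduct (star v) (A.mulVec w)

/-- |v⟩⟨w| -/
noncomputable def ketbra {d : ℕ} (v w : Fin d → ℂ) : Matrix (Fin d) (Fin d) ℂ :=
  Matrix.vecMulVec v (star w)

/-- A quantum channel in Kraus form: N(X) = ∑ m, K m * X * (K m)ᴴ. -/
noncomputable def krausMap {d : ℕ} {ι : Type} [Fintype ι] (K : ι → Matrix (Fin d) (Fin d) ℂ)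
    (X : Matrix (Fin d) (Fin d) ℂ) : Matrix (Fin d) (Fin d) ℂ :=
  ∑ m, K m * X * (K m)ᴴ

/-- The adjoint map: N†(X) = ∑ m, (K m)ᴴ * X * K m. -/
noncomputable def krausAdj {d : ℕ} {ι : Type} [Fintype ι] (K : ι → Matrix (Fin d) (Fin d) ℂ)
    (X : Matrix (Fin d) (Fin d) ℂ) : Matrix (Fin d) (Fin d) ℂ :=
  ∑ m, (K m)ᴴ * X * K m

/-- An orthonormal family of vectors in ℂ^d. -/
def IsONB {d : ℕ} (e : Fin d → Fin d → ℂ) : Prop :=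
  ∀ i j, dotProduct (star (e i)) (e j) = if i = j then 1 else 0

/-- For A = ∑ i, r i • |e i⟩⟨e i| with `e` orthonormal and `r` positive, the complex
matrix power A^z = exp (z log A) is given by A^z = ∑ i, (r i)^z • |e i⟩⟨e i|. -/
noncomputable def projPow {d : ℕ} (r : Fin d → ℝ) (e : Fin d → Fin d → ℂ) (z : ℂ) :
    Matrix (Fin d) (Fin d) ℂ :=
  ∑ i, ((r i : ℂ) ^ z) • ketbra (e i) (e i)

/-- The two-point-measurement quasi-probability
P^{μ,ν}_{ij,k'l'} = p_μ ⟨φ'_ν| Π_{k'} N(Π_i |ψ_μ⟩⟨ψ_μ| Π_j) Π_{l'} |φ'_ν⟩. -/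
noncomputable def tpmP {d : ℕ} {ι : Type} [Fintype ι] (K : ι → Matrix (Fin d) (Fin d) ℂ)
    (p : Fin d → ℝ) (ψ : Fin d → Fin d → ℂ) (φ : Fin d → Fin d → ℂ)
    (e : Fin d → Fin d → ℂ) (f : Fin d → Fin d → ℂ)
    (μ ν i j k l : Fin d) : ℂ :=
  (p μ : ℂ) *
    braket (φ ν)
      (ketbra (f k) (f k) *
        krausMap K (ketbra (e i) (e i) * ketbra (ψ μ) (ψ μ) * ketbra (e j) (e j)) *
        ketbra (f l) (f l))
      (φ ν)

/-- The Petz recovery map, expressed through the eigendecompositions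
γ = ∑ r_i |i⟩⟨i| and N(γ) = ∑ r'_k |k'⟩⟨k'|:
R_γ(X) = γ^{1/2} N†(N(γ)^{-1/2} X N(γ)^{-1/2}) γ^{1/2}. -/
noncomputable def petzB {d : ℕ} {ι : Type} [Fintype ι] (K : ι → Matrix (Fin d) (Fin d) ℂ)
    (r : Fin d → ℝ) (e : Fin d → Fin d → ℂ) (r' : Fin d → ℝ) (f : Fin d → Fin d → ℂ)
    (X : Matrix (Fin d) (Fin d) ℂ) : Matrix (Fin d) (Fin d) ℂ :=
  projPow r e (1/2) * krausAdj K (projPow r' f (-(1/2)) * X * projPow r' f (-(1/2))) *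
    projPow r e (1/2)

/-- The backward two-point-measurement quasi-probability
P^{μ,ν}_{←,ij,k'l'} = p'_ν ⟨ψ_μ| Π_i R(Π_{k'} |φ'_ν⟩⟨φ'_ν| Π_{l'}) Π_j |ψ_μ⟩
for a backward (recovery) channel R. -/
noncomputable def tpmPback {d : ℕ} (R : Matrix (Fin d) (Fin d) ℂ → Matrix (Fin d) (Fin d) ℂ)
    (p' : Fin d → ℝ) (ψ : Fin d → Fin d → ℂ) (φ : Fin d → Fin d → ℂ)
    (e : Fin d → Fin d → ℂ) (f : Fin d → Fin d → ℂ)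
    (μ ν i j k l : Fin d) : ℂ :=
  (p' ν : ℂ) *
    braket (ψ μ)
      (ketbra (e i) (e i) *
        R (ketbra (f k) (f k) * ketbra (φ ν) (φ ν) * ketbra (f l) (f l)) *
        ketbra (e j) (e j))
      (ψ μ)

/-!
Each forward quasi-probability is `e^σ` times the backward one with `i ↔ j` and `k' ↔ l'`
exchanged. Writing the Petz map out, `γ^{1/2}` and `N(γ)^{-1/2}` act on the eigenvectors
`|i⟩, |k'⟩` as the scalars `√(r_i r_j / (r'_{k'} r'_{l'}))`, which together with `p'_ν / p_μ`
is exactly `e^{-σ}`; what remains, `⟨j|N†(|l'⟩⟨k'|)|i⟩`, is the forward amplitude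
`⟨k'|N(|i⟩⟨j|)|l'⟩` by duality of `N` and `N†`. The exchange is a bijection of index tuples
carrying `σ̃` to `-σ`, so the two restricted sums agree up to the factor `e^s`.
-/

section Braket

variable {d : ℕ}

theorem braket_smul (v w : Fin d → ℂ) (c : ℂ) (M : Matrix (Fin d) (Fin d) ℂ) :
    braket v (c • M) w = c * braket v M w := by
  rw [braket, braket, smul_mulVec, dotProduct_smul, smul_eq_mul]

theorem braket_sum {α : Type*} (s : Finset α) (v w : Fin d → ℂ)
    (M : α → Matrix (Fin d) (Fin d) ℂ) :
    braket v (∑ m ∈ s, M m) w = ∑ m ∈ s, braket v (M m) w := by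
  rw [braket, sum_mulVec, dotProduct_sum]
  rfl

theorem braket_ketbra (v w a b : Fin d → ℂ) :
    braket v (ketbra a b) w = (star v ⬝ᵥ a) * (star b ⬝ᵥ w) := by
  rw [braket, ketbra, vecMulVec_mulVec, dotProduct_smul, MulOpposite.smul_eq_mul_unop,
    MulOpposite.unop_op]

theorem braket_conjTranspose_mul_mul (v w : Fin d → ℂ) (A M B : Matrix (Fin d) (Fin d) ℂ) :
    braket v (Aᴴ * M * B) w = braket (A *ᵥ v) M (B *ᵥ w) := by
  rw [braket, braket, ← mulVec_mulVec, ← mulVec_mulVec, dotProduct_mulVec, star_mulVec]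

theorem braket_mul_mul_of_eigen {v w : Fin d → ℂ} {A B : Matrix (Fin d) (Fin d) ℂ} {α β : ℂ}
    (hv : star v ᵥ* A = α • star v) (hw : B *ᵥ w = β • w) (M : Matrix (Fin d) (Fin d) ℂ) :
    braket v (A * M * B) w = α * β * braket v M w := by
  rw [braket, braket, ← mulVec_mulVec, ← mulVec_mulVec, dotProduct_mulVec, hv, hw,
    mulVec_smul, smul_dotProduct, dotProduct_smul, smul_eq_mul, smul_eq_mul, mul_left_comm,
    ← mul_assoc, mul_comm β]

theorem mul_ketbra_mul_of_eigen {a b : Fin d → ℂ} {A B : Matrix (Fin d) (Fin d) ℂ} {α β : ℂ}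
    (ha : A *ᵥ a = α • a) (hb : star b ᵥ* B = β • star b) :
    A * ketbra a b * B = (α * β) • ketbra a b := by
  rw [ketbra, mul_vecMulVec, vecMulVec_mul, ha, hb, smul_vecMulVec, vecMulVec_smul, smul_smul]

theorem ketbra_mul_mul_ketbra (a b : Fin d → ℂ) (M : Matrix (Fin d) (Fin d) ℂ) :
    ketbra a a * M * ketbra b b = braket a M b • ketbra a b := by
  rw [ketbra, vecMulVec_mul, ketbra, vecMulVec_mul_vecMulVec, vecMulVec_smul, braket,
    dotProduct_mulVec]
  rfl

end Braket

section ProjPow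

variable {d : ℕ} {r : Fin d → ℝ} {e : Fin d → Fin d → ℂ}

theorem projPow_mulVec (he : IsONB e) (z : ℂ) (i : Fin d) :
    projPow r e z *ᵥ e i = ((r i : ℂ) ^ z) • e i := by
  simp only [projPow, ketbra, sum_mulVec, smul_mulVec, vecMulVec_mulVec, op_smul_eq_smul,
    he _ i, ite_smul, one_smul, zero_smul, smul_ite, smul_zero,
    Finset.sum_ite_eq', Finset.mem_univ, if_true]

theorem star_vecMul_projPow (he : IsONB e) (z : ℂ) (i : Fin d) :
    star (e i) ᵥ* projPow r e z = ((r i : ℂ) ^ z) • star (e i) := by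
  simp only [projPow, ketbra, vecMul_sum, vecMul_smul, vecMul_vecMulVec, he i, ite_smul,
    one_smul, zero_smul, smul_ite, smul_zero, Finset.sum_ite_eq, Finset.mem_univ, if_true]

end ProjPow

section Kraus

variable {d : ℕ} {ι : Type} [Fintype ι] (K : ι → Matrix (Fin d) (Fin d) ℂ)

theorem krausMap_smul (c : ℂ) (X : Matrix (Fin d) (Fin d) ℂ) :
    krausMap K (c • X) = c • krausMap K X := by
  simp only [krausMap, Finset.smul_sum, mul_smul_comm, smul_mul_assoc]

theorem krausAdj_smul (c : ℂ) (X : Matrix (Fin d) (Fin d) ℂ) :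
    krausAdj K (c • X) = c • krausAdj K X := by
  simp only [krausAdj, Finset.smul_sum, mul_smul_comm, smul_mul_assoc]

theorem braket_krausAdj_ketbra (a b c w : Fin d → ℂ) :
    braket a (krausAdj K (ketbra b c)) w = braket c (krausMap K (ketbra w a)) b := by
  rw [krausAdj, krausMap, braket_sum, braket_sum]
  refine Finset.sum_congr rfl fun m _ => ?_
  rw [braket_conjTranspose_mul_mul, ← conjTranspose_conjTranspose (K m),
    braket_conjTranspose_mul_mul, conjTranspose_conjTranspose, braket_ketbra, braket_ketbra]
  simp only [star_mulVec, conjTranspose_conjTranspose, dotProduct_mulVec]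
  ring

end Kraus

section QuasiProbability

variable {d : ℕ} {ι : Type} [Fintype ι] (K : ι → Matrix (Fin d) (Fin d) ℂ)

theorem tpmP_eq (p : Fin d → ℝ) (ψ φ e f : Fin d → Fin d → ℂ) (μ ν i j k l : Fin d) :
    tpmP K p ψ φ e f μ ν i j k l =
      p μ * ((star (φ ν) ⬝ᵥ f k) * (star (f l) ⬝ᵥ φ ν)) *
        ((star (e i) ⬝ᵥ ψ μ) * (star (ψ μ) ⬝ᵥ e j)) *
        braket (f k) (krausMap K (ketbra (e i) (e j))) (f l) := by
  rw [tpmP, ketbra_mul_mul_ketbra, braket_smul, braket_ketbra, ketbra_mul_mul_ketbra,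
    braket_ketbra, krausMap_smul, braket_smul]
  ring

theorem tpmPback_eq {R : Matrix (Fin d) (Fin d) ℂ → Matrix (Fin d) (Fin d) ℂ}
    (hR : ∀ (c : ℂ) X, R (c • X) = c • R X)
    (p' : Fin d → ℝ) (ψ φ e f : Fin d → Fin d → ℂ) (μ ν i j k l : Fin d) :
    tpmPback R p' ψ φ e f μ ν i j k l =
      p' ν * ((star (f k) ⬝ᵥ φ ν) * (star (φ ν) ⬝ᵥ f l)) *
        ((star (ψ μ) ⬝ᵥ e i) * (star (e j) ⬝ᵥ ψ μ)) *
        braket (e i) (R (ketbra (f k) (f l))) (e j) := by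
  rw [tpmPback, ketbra_mul_mul_ketbra, braket_smul, braket_ketbra, ketbra_mul_mul_ketbra,
    braket_ketbra, hR, braket_smul]
  ring

variable {r r' : Fin d → ℝ} {e f : Fin d → Fin d → ℂ}

theorem petzB_smul (c : ℂ) (X : Matrix (Fin d) (Fin d) ℂ) :
    petzB K r e r' f (c • X) = c • petzB K r e r' f X := by
  rw [petzB, petzB, mul_smul_comm, smul_mul_assoc, krausAdj_smul, mul_smul_comm, smul_mul_assoc]

theorem braket_petzB_ketbra (he : IsONB e) (hf : IsONB f)
    (i j k l : Fin d) :
    braket (e i) (petzB K r e r' f (ketbra (f k) (f l))) (e j) =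
      (r i : ℂ) ^ (1 / 2 : ℂ) * (r j : ℂ) ^ (1 / 2 : ℂ) *
        ((r' k : ℂ) ^ (-(1 / 2) : ℂ) * (r' l : ℂ) ^ (-(1 / 2) : ℂ)) *
        braket (e i) (krausAdj K (ketbra (f k) (f l))) (e j) := by
  rw [petzB, braket_mul_mul_of_eigen (star_vecMul_projPow he _ i) (projPow_mulVec he _ j),
    mul_ketbra_mul_of_eigen (projPow_mulVec hf _ k) (star_vecMul_projPow hf _ l), krausAdj_smul,
    braket_smul]
  ring

end QuasiProbability

section EntropyProduction

variable {α : Type*} (p p' r r' : α → ℝ) (μ ν i j k l : α)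

/-- The entropy production `σ_R(μ,i,j,ν,k',l')`; the backward `σ̃_R` is
`entropyProduction p' p r' r ν μ k' l' i j`. -/
noncomputable def entropyProduction : ℝ :=
  (Real.log (p μ) - Real.log (p' ν)) - 1/2 * Real.log (r i * r j / (r' k * r' l))

theorem entropyProduction_swap :
    entropyProduction p' p r' r ν μ l k j i = -entropyProduction p p' r r' μ ν i j k l := by
  rw [entropyProduction, entropyProduction, mul_comm (r' l), mul_comm (r j), ← inv_div (r i * r j),
    Real.log_inv]
  ring

theorem exp_entropyProduction_mul {p p' r r' : α → ℝ} {μ ν i j k l : α} (hp : 0 < p μ)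
    (hp' : 0 < p' ν) (hi : 0 < r i) (hj : 0 < r j) (hk : 0 < r' k) (hl : 0 < r' l) :
    Complex.exp (entropyProduction p p' r r' μ ν i j k l) *
        (p' ν * ((r i : ℂ) ^ (1 / 2 : ℂ) * (r j : ℂ) ^ (1 / 2 : ℂ) *
          ((r' k : ℂ) ^ (-(1 / 2) : ℂ) * (r' l : ℂ) ^ (-(1 / 2) : ℂ)))) = p μ := by
  have ofReal_eq_exp {x : ℝ} (hx : 0 < x) : (x : ℂ) = Complex.exp (Real.log x) := by
    rw [← Complex.ofReal_exp, Real.exp_log hx]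
  have cpow_eq_exp {x : ℝ} (hx : 0 < x) (z : ℂ) :
      (x : ℂ) ^ z = Complex.exp (Real.log x * z) := by
    rw [Complex.cpow_def_of_ne_zero (by exact_mod_cast hx.ne'), Complex.ofReal_log hx.le]
  rw [cpow_eq_exp hi, cpow_eq_exp hj, cpow_eq_exp hk, cpow_eq_exp hl, ofReal_eq_exp hp',
    ofReal_eq_exp hp]
  simp only [← Complex.exp_add]
  congr 1
  rw [entropyProduction, Real.log_div (by positivity) (by positivity),
    Real.log_mul hi.ne' hj.ne', Real.log_mul hk.ne' hl.ne']
  push_cast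
  ring

end EntropyProduction

theorem Finset.sum_swap_pairs {α β M : Type*} [Fintype α] [Fintype β]
    [AddCommMonoid M] (g : α → α → β → β → M) :
    ∑ i, ∑ j, ∑ k, ∑ l, g j i l k = ∑ i, ∑ j, ∑ k, ∑ l, g i j k l := by
  rw [Finset.sum_comm]
  exact Finset.sum_congr rfl fun _ _ => Finset.sum_congr rfl fun _ _ => Finset.sum_comm

section Crooks

variable {d : ℕ} {ι : Type} [Fintype ι] (K : ι → Matrix (Fin d) (Fin d) ℂ)
  {r r' p p' : Fin d → ℝ} {e f ψ φ : Fin d → Fin d → ℂ}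

theorem tpmP_eq_exp_mul_tpmPback (he : IsONB e) (hf : IsONB f) (hr : ∀ i, 0 < r i)
    (hr' : ∀ k, 0 < r' k) (hp : ∀ μ, 0 < p μ) (hp' : ∀ ν, 0 < p' ν) (μ ν i j k l : Fin d) :
    tpmP K p ψ φ e f μ ν i j k l =
      Complex.exp (entropyProduction p p' r r' μ ν i j k l) *
        tpmPback (petzB K r e r' f) p' ψ φ e f μ ν j i l k := by
  rw [tpmP_eq, tpmPback_eq (petzB_smul K), braket_petzB_ketbra K he hf, braket_krausAdj_ketbra,
    ← exp_entropyProduction_mul (hp μ) (hp' ν) (hr i) (hr j) (hr' k) (hr' l)]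
  ring

theorem sum_tpmP_entropyProduction_eq (he : IsONB e) (hf : IsONB f) (hr : ∀ i, 0 < r i)
    (hr' : ∀ k, 0 < r' k) (hp : ∀ μ, 0 < p μ) (hp' : ∀ ν, 0 < p' ν) (μ ν : Fin d) (s : ℝ) :
    (∑ i, ∑ j, ∑ k, ∑ l,
      if entropyProduction p p' r r' μ ν i j k l = s then tpmP K p ψ φ e f μ ν i j k l
      else 0) =
    Complex.exp s * ∑ i, ∑ j, ∑ k, ∑ l,
      if entropyProduction p' p r' r ν μ k l i j = -s then
        tpmPback (petzB K r e r' f) p' ψ φ e f μ ν i j k l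
      else 0 := by
  simp only [Finset.mul_sum]
  refine Eq.trans ?_ (Finset.sum_swap_pairs _)
  refine Finset.sum_congr rfl fun i _ => Finset.sum_congr rfl fun j _ =>
    Finset.sum_congr rfl fun k _ => Finset.sum_congr rfl fun l _ => ?_
  simp only [entropyProduction_swap p p' r r' μ ν i j k l, neg_inj]
  split_ifs with hs
  · rw [tpmP_eq_exp_mul_tpmPback K he hf hr hr' hp hp', hs]
  · rw [mul_zero]

end Crooks

theorem quantum_crooks_fluctuation_theorem_general
    {d : ℕ} {ι : Type} [Fintype ι] (K : ι → Matrix (Fin d) (Fin d) ℂ)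
    (r : Fin d → ℝ) (e : Fin d → Fin d → ℂ) (hr : ∀ i, 0 < r i) (he : IsONB e)
    (r' : Fin d → ℝ) (f : Fin d → Fin d → ℂ) (hr' : ∀ k, 0 < r' k) (hf : IsONB f)
    (p : Fin d → ℝ) (ψ : Fin d → Fin d → ℂ) (hp : ∀ μ, 0 < p μ)
    (p' : Fin d → ℝ) (φ : Fin d → Fin d → ℂ) (hp' : ∀ ν, 0 < p' ν) :
    ∀ s : ℝ,
      (∑ μ, ∑ ν, ∑ i, ∑ j, ∑ k, ∑ l,
        if (Real.log (p μ) - Real.log (p' ν)) -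
            1/2 * Real.log (r i * r j / (r' k * r' l)) = s then
          tpmP K p ψ φ e f μ ν i j k l
        else 0) =
      Complex.exp (s : ℂ) *
        (∑ μ, ∑ ν, ∑ i, ∑ j, ∑ k, ∑ l,
          if (Real.log (p' ν) - Real.log (p μ)) -
              1/2 * Real.log (r' k * r' l / (r i * r j)) = -s then
            tpmPback (petzB K r e r' f) p' ψ φ e f μ ν i j k l
          else 0) := by
  intro s
  rw [Finset.mul_sum]
  refine Finset.sum_congr rfl fun μ _ => ?_
  rw [Finset.mul_sum]
  refine Finset.sum_congr rfl fun ν _ => ?_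
  exact sum_tpmP_entropyProduction_eq K he hf hr hr' hp hp' μ ν s

/-- quantum Crooks fluctuation theorem, P_→(σ) = e^σ P_←(−σ). -/
theorem quantum_crooks_fluctuation_theorem
    {d : ℕ} {ι : Type} [Fintype ι] (K : ι → Matrix (Fin d) (Fin d) ℂ)
    (hK : ∑ m, (K m)ᴴ * K m = 1)
    (r : Fin d → ℝ) (e : Fin d → Fin d → ℂ) (hr : ∀ i, 0 < r i) (he : IsONB e)
    (hrtr : ∑ i, r i = 1)
    (r' : Fin d → ℝ) (f : Fin d → Fin d → ℂ) (hr' : ∀ k, 0 < r' k) (hf : IsONB f)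
    (hNγ : krausMap K (∑ i, ((r i : ℂ)) • ketbra (e i) (e i)) =
      ∑ k, ((r' k : ℂ)) • ketbra (f k) (f k))
    (ρ : Matrix (Fin d) (Fin d) ℂ)
    (p : Fin d → ℝ) (ψ : Fin d → Fin d → ℂ) (hp : ∀ μ, 0 < p μ) (hψ : IsONB ψ)
    (hρ : ρ = ∑ μ, ((p μ : ℂ)) • ketbra (ψ μ) (ψ μ))
    (p' : Fin d → ℝ) (φ : Fin d → Fin d → ℂ) (hp' : ∀ ν, 0 < p' ν) (hφ : IsONB φ)
    (hNρ : krausMap K ρ = ∑ ν, ((p' ν : ℂ)) • ketbra (φ ν) (φ ν)) :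
    ∀ s : ℝ,
      (∑ μ, ∑ ν, ∑ i, ∑ j, ∑ k, ∑ l,
        if (Real.log (p μ) - Real.log (p' ν)) -
            1/2 * Real.log (r i * r j / (r' k * r' l)) = s then
          tpmP K p ψ φ e f μ ν i j k l
        else 0) =
      Complex.exp (s : ℂ) *
        (∑ μ, ∑ ν, ∑ i, ∑ j, ∑ k, ∑ l,
          if (Real.log (p' ν) - Real.log (p μ)) -
              1/2 * Real.log (r' k * r' l / (r i * r j)) = -s then
            tpmPback (petzB K r e r' f) p' ψ φ e f μ ν i j k l
          else 0) :=
  quantum_crooks_fluctuation_theorem_general K r e hr he r' f hr' hf p ψ hp p' φ hp'
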